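/- Epoch descent lemma: suppose $f = \frac{1}{n}\sum_{i=1}^n f_i$ is $L$-smooth and each $f_i$ is $L_i$-smooth with $L_{\max} = \max_i L_i$. Given a permutation $\pi$ of $\{1,\ldots,n\}$ and iterates $x_{j+1} = x_j - \eta \nabla f_{\pi(j+1)}(x_j)$ for $j = 0,\ldots,n-1$ with constant step size $\eta \leq \frac{1}{nL}$, it holds that $f(x_n) \leq f(x_0) - \frac{n\eta}{2}\|\nabla f(x_0)\|^2 + \frac{L_{\max}^2 \eta}{2}\sum_{i=0}^n \|x_i - x_0\|^2$. -/

import Mathlib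

/-!
Over one epoch `x n - x 0 = -η S` with `S = ∑ⱼ ∇f_{π j} (x j)`, whereas `n ∇F (x 0) = ∑ⱼ ∇f_{π j} (x 0)`.
The descent lemma `F y ≤ F x + ⟪∇F x, y - x⟫ + L/2 ‖y - x‖²` applied to the whole epoch, together
with `Lη ≤ 1/n` and completing the square, bounds the decrease by
`-(nη/2) ‖∇F (x 0)‖² + η/(2n) ‖S - n ∇F (x 0)‖²`. The deviation `S - n ∇F (x 0)` is a sum of `n`
differences `∇f_{π j} (x j) - ∇f_{π j} (x 0)`, so `L_max`-smoothness and Cauchy–Schwarz give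
`‖S - n ∇F (x 0)‖² ≤ n L_max² ∑ⱼ ‖x j - x 0‖²`.
-/

open RealInnerProductSpace Finset

theorem sub_eq_neg_smul_sum_of_eq_sub_smul {R M : Type*} [Ring R] [AddCommGroup M] [Module R M]
    {n : ℕ} {x : ℕ → M} {η : R} {u : Fin n → M}
    (hstep : ∀ j (h : j < n), x (j + 1) = x j - η • u ⟨j, h⟩) :
    x n - x 0 = -(η • ∑ j, u j) := by
  rw [← sum_range_sub x n, ← Fin.sum_univ_eq_sum_range (fun j => x (j + 1) - x j), smul_sum,
    ← sum_neg_distrib]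
  refine sum_congr rfl fun j _ => ?_
  rw [hstep j j.2]
  abel

theorem norm_sum_sq_le_card_mul_sum_norm_sq {ι E : Type*} [SeminormedAddCommGroup E]
    (s : Finset ι) (u : ι → E) :
    ‖∑ i ∈ s, u i‖ ^ 2 ≤ #s * ∑ i ∈ s, ‖u i‖ ^ 2 :=
  (pow_le_pow_left₀ (norm_nonneg _) (norm_sum_le s u) 2).trans (sq_sum_le_card_mul_sum_sq ..)

theorem norm_sum_sub_sq_le_of_lipschitz {ι E : Type*} [SeminormedAddCommGroup E] (s : Finset ι)
    {G : ι → E → E} {K : ℝ} (hG : ∀ i x y, ‖G i x - G i y‖ ≤ K * ‖x - y‖) (y : ι → E) (z : E) :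
    ‖∑ i ∈ s, (G i (y i) - G i z)‖ ^ 2 ≤ #s * (K ^ 2 * ∑ i ∈ s, ‖y i - z‖ ^ 2) := by
  refine (norm_sum_sq_le_card_mul_sum_norm_sq _ _).trans ?_
  rw [mul_sum s _ (K ^ 2)]
  gcongr with i
  rw [← mul_pow]
  exact pow_le_pow_left₀ (norm_nonneg _) (hG _ _ _) 2

section InnerProductSpace

variable {E : Type*} [NormedAddCommGroup E] [InnerProductSpace ℝ E]

theorem inner_neg_smul_add_mul_norm_sq_le {g S : E} {n η L : ℝ} (hn : 0 < n) (hη : 0 ≤ η)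
    (hLη : L * η ≤ 1 / n) :
    ⟪g, -(η • S)⟫ + L / 2 * ‖-(η • S)‖ ^ 2
      ≤ -(n * η / 2) * ‖g‖ ^ 2 + η / (2 * n) * ‖S - n • g‖ ^ 2 := by
  have hquad : L / 2 * ‖-(η • S)‖ ^ 2 ≤ η / (2 * n) * ‖S‖ ^ 2 := by
    rw [norm_neg, norm_smul, mul_pow, Real.norm_eq_abs, sq_abs]
    calc L / 2 * (η ^ 2 * ‖S‖ ^ 2) = (L * η) * (η / 2 * ‖S‖ ^ 2) := by ring
      _ ≤ 1 / n * (η / 2 * ‖S‖ ^ 2) := by gcongr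
      _ = η / (2 * n) * ‖S‖ ^ 2 := by field_simp
  have hsquare : -(n * η / 2) * ‖g‖ ^ 2 + η / (2 * n) * ‖S - n • g‖ ^ 2
      = -(η * ⟪g, S⟫) + η / (2 * n) * ‖S‖ ^ 2 := by
    rw [norm_sub_sq_real, inner_smul_right, real_inner_comm, norm_smul, Real.norm_eq_abs,
      abs_of_pos hn]
    field_simp
    ring
  rw [hsquare, inner_neg_right, real_inner_smul_right]
  linarith

variable [CompleteSpace E]

theorem hasDerivAt_apply_add_smul {F : E → ℝ} {x v : E} {t : ℝ}
    (hF : DifferentiableAt ℝ F (x + t • v)) :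
    HasDerivAt (fun s : ℝ => F (x + s • v)) ⟪gradient F (x + t • v), v⟫ t := by
  have hline : HasDerivAt (fun s : ℝ => x + s • v) v t := by
    simpa using ((hasDerivAt_id t).smul_const v).const_add x
  simpa [Function.comp_def] using
    (hasGradientAt_iff_hasFDerivAt.mp hF.hasGradientAt).comp_hasDerivAt t hline

theorem le_add_inner_gradient_add_mul_norm_sq {F : E → ℝ} {L : ℝ} (hF : Differentiable ℝ F)
    (hsmooth : ∀ x y, ‖gradient F x - gradient F y‖ ≤ L * ‖x - y‖) (x y : E) :
    F y ≤ F x + ⟪gradient F x, y - x⟫ + L / 2 * ‖y - x‖ ^ 2 := by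
  set v := y - x
  -- `φ' t = ⟪∇F (x + t • v) - ∇F x, v⟫ - L t ‖v‖² ≤ 0` for `t ≥ 0`, so `φ 1 ≤ φ 0`
  set φ : ℝ → ℝ := fun t => F (x + t • v) - t * ⟪gradient F x, v⟫ - L / 2 * t ^ 2 * ‖v‖ ^ 2
  have hφ : ∀ t, HasDerivAt φ
      (⟪gradient F (x + t • v), v⟫ - ⟪gradient F x, v⟫ - L * t * ‖v‖ ^ 2) t := by
    intro t
    refine (((hasDerivAt_apply_add_smul (hF _)).sub ((hasDerivAt_id t).mul_const _)).sub
      (((hasDerivAt_pow 2 t).const_mul (L / 2)).mul_const (‖v‖ ^ 2))).congr_deriv ?_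
    push_cast
    ring
  have hanti : AntitoneOn φ (Set.Icc 0 1) := by
    refine antitoneOn_of_hasDerivWithinAt_nonpos (convex_Icc 0 1)
      (fun t _ => (hφ t).continuousAt.continuousWithinAt)
      (fun t _ => (hφ t).hasDerivWithinAt) fun t ht => ?_
    rw [interior_Icc] at ht
    have hgrad : ‖gradient F (x + t • v) - gradient F x‖ ≤ L * (t * ‖v‖) := by
      simpa [norm_smul, abs_of_pos ht.1] using hsmooth (x + t • v) x
    have hinner :=
      (real_inner_le_norm _ v).trans (mul_le_mul_of_nonneg_right hgrad (norm_nonneg v))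
    rw [inner_sub_left] at hinner
    linarith
  have hφ_one_le := hanti (by simp) (by simp) zero_le_one
  simp only [φ, v, one_smul, zero_smul, add_zero, add_sub_cancel] at hφ_one_le
  linarith

theorem gradient_const_mul_sum {ι : Type*} {s : Finset ι} {f : ι → E → ℝ} {x : E}
    (hf : ∀ i ∈ s, DifferentiableAt ℝ (f i) x) (c : ℝ) :
    gradient (fun y => c * ∑ i ∈ s, f i y) x = c • ∑ i ∈ s, gradient (f i) x := by
  refine HasGradientAt.gradient (hasGradientAt_iff_hasFDerivAt.mpr ?_)
  rw [map_smul, map_sum]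
  exact (HasFDerivAt.fun_sum fun i hi =>
    hasGradientAt_iff_hasFDerivAt.mp (hf i hi).hasGradientAt).const_mul c

end InnerProductSpace

theorem epoch_descent_lemma_general
    (d n : ℕ) (hn : 0 < n)
    (f : Fin n → EuclideanSpace ℝ (Fin d) → ℝ)
    (hdiff : ∀ i, Differentiable ℝ (f i))
    (F : EuclideanSpace ℝ (Fin d) → ℝ)
    (hF : F = fun x => (n : ℝ)⁻¹ * ∑ i, f i x)
    (L Lmax : ℝ) (hL : 0 < L)
    (hsmooth : ∀ x y : EuclideanSpace ℝ (Fin d),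
      ‖gradient F x - gradient F y‖ ≤ L * ‖x - y‖)
    (hsmooth_i : ∀ i, ∀ x y : EuclideanSpace ℝ (Fin d),
      ‖gradient (f i) x - gradient (f i) y‖ ≤ Lmax * ‖x - y‖)
    (π : Equiv.Perm (Fin n))
    (η : ℝ) (hη0 : 0 < η) (hη : η ≤ 1 / (n * L))
    (x : ℕ → EuclideanSpace ℝ (Fin d))
    (hstep : ∀ j (h : j < n), x (j + 1) = x j - η • gradient (f (π ⟨j, h⟩)) (x j)) :
    F (x n) ≤ F (x 0) - (n * η / 2) * ‖gradient F (x 0)‖ ^ 2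
      + (Lmax ^ 2 * η / 2) * ∑ i ∈ Finset.range (n + 1), ‖x i - x 0‖ ^ 2 := by
  have hn' : (0 : ℝ) < n := Nat.cast_pos.mpr hn
  set g := gradient F (x 0) with hg
  set S := ∑ j, gradient (f (π j)) (x j)
  have hxn : x n - x 0 = -(η • S) := sub_eq_neg_smul_sum_of_eq_sub_smul hstep
  have hgrad : (n : ℝ) • g = ∑ i, gradient (f i) (x 0) := by
    rw [hg, hF, gradient_const_mul_sum (fun i _ => (hdiff i).differentiableAt), smul_inv_smul₀ hn'.ne']
  have hdev : S - (n : ℝ) • g = ∑ j, (gradient (f (π j)) (x j) - gradient (f (π j)) (x 0)) := by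
    rw [hgrad, ← Equiv.sum_comp π, sum_sub_distrib]
  have hdev_le : ‖S - (n : ℝ) • g‖ ^ 2 ≤ n * (Lmax ^ 2 * ∑ j : Fin n, ‖x j - x 0‖ ^ 2) := by
    simpa [hdev] using norm_sum_sub_sq_le_of_lipschitz univ (fun j => hsmooth_i (π j)) (x ·) (x 0)
  have hsum : ∑ j : Fin n, ‖x j - x 0‖ ^ 2 ≤ ∑ i ∈ range (n + 1), ‖x i - x 0‖ ^ 2 := by
    rw [Fin.sum_univ_eq_sum_range (fun i => ‖x i - x 0‖ ^ 2), sum_range_succ]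
    exact le_add_of_nonneg_right (by positivity)
  have hLη : L * η ≤ 1 / n := by
    calc L * η ≤ L * (1 / (n * L)) := by gcongr
      _ = 1 / n := by field_simp
  have hdescent := le_add_inner_gradient_add_mul_norm_sq (by rw [hF]; fun_prop) hsmooth (x 0) (x n)
  rw [hxn] at hdescent
  calc F (x n) ≤ F (x 0) + (⟪g, -(η • S)⟫ + L / 2 * ‖-(η • S)‖ ^ 2) := by linarith
    _ ≤ F (x 0) + (-(n * η / 2) * ‖g‖ ^ 2 + η / (2 * n) * ‖S - (n : ℝ) • g‖ ^ 2) :=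
      add_le_add_right (inner_neg_smul_add_mul_norm_sq_le hn' hη0.le hLη) _
    _ ≤ F (x 0) + (-(n * η / 2) * ‖g‖ ^ 2
          + η / (2 * n) * (n * (Lmax ^ 2 * ∑ i ∈ range (n + 1), ‖x i - x 0‖ ^ 2))) := by
      gcongr
      exact hdev_le.trans (by gcongr)
    _ = _ := by field_simp; ring

/-- Epoch descent lemma: one pass over the data in the order given by a
permutation `π`, with constant step size `η ≤ 1/(nL)`, decreases the objective
up to a term controlled by the within-epoch deviations. -/
theorem epoch_descent_lemma
    (d n : ℕ) (hn : 0 < n)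
    (f : Fin n → EuclideanSpace ℝ (Fin d) → ℝ)
    (hdiff : ∀ i, Differentiable ℝ (f i))
    (F : EuclideanSpace ℝ (Fin d) → ℝ)
    (hF : F = fun x => (n : ℝ)⁻¹ * ∑ i, f i x)
    (L Lmax : ℝ) (hL : 0 < L) (hLmax : L ≤ Lmax)
    (hsmooth : ∀ x y : EuclideanSpace ℝ (Fin d),
      ‖gradient F x - gradient F y‖ ≤ L * ‖x - y‖)
    (hsmooth_i : ∀ i, ∀ x y : EuclideanSpace ℝ (Fin d),
      ‖gradient (f i) x - gradient (f i) y‖ ≤ Lmax * ‖x - y‖)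
    (π : Equiv.Perm (Fin n))
    (η : ℝ) (hη0 : 0 < η) (hη : η ≤ 1 / (n * L))
    (x : ℕ → EuclideanSpace ℝ (Fin d))
    (hstep : ∀ j (h : j < n), x (j + 1) = x j - η • gradient (f (π ⟨j, h⟩)) (x j)) :
    F (x n) ≤ F (x 0) - (n * η / 2) * ‖gradient F (x 0)‖ ^ 2
      + (Lmax ^ 2 * η / 2) * ∑ i ∈ Finset.range (n + 1), ‖x i - x 0‖ ^ 2 :=
  epoch_descent_lemma_general d n hn f hdiff F hF L Lmax hL hsmooth hsmooth_i π η hη0 hη x hstep
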